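/- For the inverse Hasse–Schmidt operators 𝔇_h on ⋀M_n, for every h ≥ 1, every m ≥ 0 and all indices i₁,…,i_h ≥ 1: 𝔇_h^m(ε^{i₁} ∧ ⋯ ∧ ε^{i_h}) = ε^{i₁+m} ∧ ⋯ ∧ ε^{i_h+m}. -/

import Mathlib

/-!
If `D_t x = x + (D_1 x) t`, the Leibniz rule shows that `D_k` sends a product of `k` such
elements to the product of their images under `D_1`, while every `D_j` with `j > k` kills it.
The generators `ε^i` are of this kind and `D_1` shifts `ε^i` to `ε^{i+1}`, so `D_h` shifts all
indices of an `h`-fold wedge product by one, and `D_h^m` by `m`.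
-/

open ExteriorAlgebra Finset

/-- `D h` are the coefficients of a multiplicative `D_t = ∑ D_h t^h` with `D_0 = 1`. -/
def IsHasseSchmidt {R A : Type*} [Semiring R] [Ring A] [Module R A]
    (D : ℕ → Module.End R A) : Prop :=
  D 0 = 1 ∧ ∀ (h : ℕ) (p q : A), D h (p * q) = ∑ x ∈ antidiagonal h, D x.1 p * D x.2 q

namespace IsHasseSchmidt

variable {R A : Type*} [Semiring R] [Ring A] [Module R A] {D : ℕ → Module.End R A}

theorem apply_one (hD : IsHasseSchmidt D) {j : ℕ} (hj : 0 < j) : D j 1 = 0 := by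
  induction j using Nat.strong_induction_on with
  | _ j ih =>
    have hsplit := hD.2 j 1 1
    rw [one_mul, sum_eq_add_of_mem (0, j) (j, 0) (by simp) (by simp) (by simp; omega)] at hsplit
    · simpa [hD.1] using hsplit
    · rintro ⟨a, b⟩ hab hne
      rw [HasAntidiagonal.mem_antidiagonal] at hab
      simp only [ne_eq, Prod.mk.injEq] at hne
      rw [ih a (by omega) (by omega), zero_mul]

/-- Since `D_t x = x + (D 1 x) t`, only two terms of the Leibniz rule survive. -/
theorem apply_mul_succ (hD : IsHasseSchmidt D) {x : A} (hx : ∀ j, 2 ≤ j → D j x = 0)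
    (j : ℕ) (q : A) : D (j + 1) (x * q) = x * D (j + 1) q + D 1 x * D j q := by
  rw [hD.2, sum_eq_add_of_mem (0, j + 1) (1, j) (by simp) (by simp [add_comm]) (by simp), hD.1]
  · rfl
  · rintro ⟨a, b⟩ hab hne
    rw [HasAntidiagonal.mem_antidiagonal] at hab
    simp only [ne_eq, Prod.mk.injEq] at hne
    rw [hx a (by omega), zero_mul]

theorem apply_list_prod (hD : IsHasseSchmidt D) (l : List A)
    (hl : ∀ x ∈ l, ∀ j, 2 ≤ j → D j x = 0) :
    (∀ j, l.length < j → D j l.prod = 0) ∧ D l.length l.prod = (l.map (D 1)).prod := by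
  induction l with
  | nil => exact ⟨fun j hj => hD.apply_one hj, by simp [hD.1]⟩
  | cons x l ih =>
    obtain ⟨hvanish, htop⟩ := ih fun y hy => hl y (List.mem_cons_of_mem x hy)
    have hx := hl x List.mem_cons_self
    refine ⟨fun j hj => ?_, ?_⟩
    · rw [List.length_cons] at hj
      obtain ⟨j, rfl⟩ : ∃ k, j = k + 1 := ⟨j - 1, by omega⟩
      rw [List.prod_cons, hD.apply_mul_succ hx, hvanish _ (by omega), hvanish _ (by omega),
        mul_zero, mul_zero, add_zero]
    · rw [List.length_cons, List.prod_cons, hD.apply_mul_succ hx, hvanish _ (Nat.lt_add_one _),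
        htop, List.map_cons, List.prod_cons, mul_zero, zero_add]

end IsHasseSchmidt

theorem IsHasseSchmidt.apply_prod_ι {S R M : Type*} [Semiring S] [CommRing R] [AddCommGroup M]
    [Module R M] [Module S (ExteriorAlgebra R M)] {ε : ℕ → M}
    {D : ℕ → Module.End S (ExteriorAlgebra R M)} (hD : IsHasseSchmidt D)
    (hD1 : ∀ i : ℕ, 1 ≤ i → D 1 (ι R (ε i)) = ι R (ε (i + 1)))
    (hD2 : ∀ j i : ℕ, 2 ≤ j → 1 ≤ i → D j (ι R (ε i)) = 0)
    {h : ℕ} (i : Fin h → ℕ) (hi : ∀ j, 1 ≤ i j) :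
    D h (List.ofFn fun j => ι R (ε (i j))).prod = (List.ofFn fun j => ι R (ε (i j + 1))).prod := by
  have key := (hD.apply_list_prod (List.ofFn fun j => ι R (ε (i j))) ?_).2
  · simpa [List.map_ofFn, Function.comp_def, hD1 _ (hi _)] using key
  · simp only [List.mem_ofFn, forall_exists_index]
    rintro _ j rfl k hk
    exact hD2 k (i j) hk (hi j)

open ExteriorAlgebra in
theorem inverse_hasseSchmidt_top_power_general (M : Type*) [AddCommGroup M]
    [Module ℤ M] (ε : ℕ → M)
    (Dbar : ℕ → Module.End ℤ (ExteriorAlgebra ℤ M))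
    (hB0 : Dbar 0 = 1)
    (hBLeib : ∀ (h : ℕ) (p q : ExteriorAlgebra ℤ M),
      Dbar h (p * q) = ∑ x ∈ Finset.HasAntidiagonal.antidiagonal h, Dbar x.1 p * Dbar x.2 q)
    (hB1 : ∀ i : ℕ, 1 ≤ i → Dbar 1 (ι ℤ (ε i)) = ι ℤ (ε (i + 1)))
    (hBhi : ∀ j i : ℕ, 2 ≤ j → 1 ≤ i → Dbar j (ι ℤ (ε i)) = 0) :
    ∀ (h m : ℕ), 1 ≤ h → ∀ i : Fin h → ℕ, (∀ j, 1 ≤ i j) →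
      (Dbar h ^ m) ((List.ofFn fun j => ι ℤ (ε (i j))).prod) =
        (List.ofFn fun j => ι ℤ (ε (i j + m))).prod := by
  have hD : IsHasseSchmidt Dbar := ⟨hB0, hBLeib⟩
  intro h m _
  induction m with
  | zero => intro i _; simp
  | succ m ih =>
    intro i hi
    rw [pow_succ, Module.End.mul_apply, hD.apply_prod_ι hB1 hBhi i hi,
      ih (fun j => i j + 1) fun j => Nat.le_add_left 1 (i j)]
    simp only [add_assoc, add_comm 1 m]

open ExteriorAlgebra in
/-- For the inverse Hasse–Schmidt operators on `⋀M_n`: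
`𝔇_h^m(ε^{i₁} ∧ ⋯ ∧ ε^{i_h}) = ε^{i₁+m} ∧ ⋯ ∧ ε^{i_h+m}`. -/
theorem inverse_hasseSchmidt_top_power (n : ℕ) (M : Type*) [AddCommGroup M]
    [Module ℤ M] (ε : ℕ → M) (hε : ∀ m : ℕ, n < m → ε m = 0)
    (Dbar : ℕ → Module.End ℤ (ExteriorAlgebra ℤ M))
    (hB0 : Dbar 0 = 1)
    (hBLeib : ∀ (h : ℕ) (p q : ExteriorAlgebra ℤ M),
      Dbar h (p * q) = ∑ x ∈ Finset.HasAntidiagonal.antidiagonal h, Dbar x.1 p * Dbar x.2 q)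
    (hB1 : ∀ i : ℕ, 1 ≤ i → Dbar 1 (ι ℤ (ε i)) = ι ℤ (ε (i + 1)))
    (hBhi : ∀ j i : ℕ, 2 ≤ j → 1 ≤ i → Dbar j (ι ℤ (ε i)) = 0) :
    ∀ (h m : ℕ), 1 ≤ h → ∀ i : Fin h → ℕ, (∀ j, 1 ≤ i j) →
      (Dbar h ^ m) ((List.ofFn fun j => ι ℤ (ε (i j))).prod) =
        (List.ofFn fun j => ι ℤ (ε (i j + m))).prod :=
  inverse_hasseSchmidt_top_power_general M ε Dbar hB0 hBLeib hB1 hBhi
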